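/- Rules (3) and (4) are inverses: if S is a face sequence of type 3 and S′ is the result of applying rule (3) to S, then S′ is a face sequence of type 4 and applying rule (4) to S′ returns S; conversely, if T is a face sequence of type 4 and T′ is the result of applying rule (4) to T, then T′ is of type 3 and applying rule (3) to T′ returns T. -/

import Mathlib

set_option linter.unusedVariables false

/-- The alphabet `{0, 1, ∗}` for face sequences. -/
inductive Letter : Type
  | zero
  | one
  | star
  deriving DecidableEq

/-- A sequence of length `n` over the alphabet `{0, 1, ∗}`. -/
abbrev FSeq (n : ℕ) := Fin n → Letter

/-- `S(1)`, the number of `1`'s in `S`. -/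
def count1 {n : ℕ} (S : FSeq n) : ℕ := (Finset.univ.filter fun i => S i = Letter.one).card

/-- `S(0)`, the number of `0`'s in `S`. -/
def count0 {n : ℕ} (S : FSeq n) : ℕ := (Finset.univ.filter fun i => S i = Letter.zero).card

/-- The number of `∗`'s in `S`. -/
def countStar {n : ℕ} (S : FSeq n) : ℕ := (Finset.univ.filter fun i => S i = Letter.star).card

/-- A face sequence: either no `∗` and exactly `k` ones, or at most `k-1` ones and
(#ones) + (#stars) ≥ `k+1`. -/
def FaceSeq {n : ℕ} (k : ℕ) (S : FSeq n) : Prop :=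
  (countStar S = 0 ∧ count1 S = k) ∨ (count1 S + 1 ≤ k ∧ k + 1 ≤ count1 S + countStar S)

/-- `v₀`, the sequence of `k` ones followed by `n - k` zeros. -/
def v0seq (n k : ℕ) : FSeq n := fun i => if (i : ℕ) < k then Letter.one else Letter.zero

/-- `S` contains at least one `∗`. -/
def hasStar {n : ℕ} (S : FSeq n) : Prop := ∃ i, S i = Letter.star

/-- There is a `1` to the right of the rightmost `∗` (in particular `S` contains a `∗`). -/
def OneRight {n : ℕ} (S : FSeq n) : Prop :=
  hasStar S ∧ ∃ i, S i = Letter.one ∧ ∀ j, i < j → S j ≠ Letter.star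

/-- There is no `1` to the right of the rightmost `∗` (and `S` contains a `∗`). -/
def NoOneRight {n : ℕ} (S : FSeq n) : Prop :=
  hasStar S ∧ ∀ i, S i = Letter.one → ∃ j, i < j ∧ S j = Letter.star

/-- There is a `0` to the left of the leftmost `∗` (in particular `S` contains a `∗`). -/
def ZeroLeft {n : ℕ} (S : FSeq n) : Prop :=
  hasStar S ∧ ∃ i, S i = Letter.zero ∧ ∀ j, j < i → S j ≠ Letter.star

/-- There is no `0` to the left of the leftmost `∗` (and `S` contains a `∗`). -/
def NoZeroLeft {n : ℕ} (S : FSeq n) : Prop :=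
  hasStar S ∧ ∀ i, S i = Letter.zero → ∃ j, j < i ∧ S j = Letter.star

/-- `i` is the position of the rightmost `1` of `S`. -/
def IsRightmostOne {n : ℕ} (S : FSeq n) (i : Fin n) : Prop :=
  S i = Letter.one ∧ ∀ j, i < j → S j ≠ Letter.one

/-- `i` is the position of the rightmost `∗` of `S`. -/
def IsRightmostStar {n : ℕ} (S : FSeq n) (i : Fin n) : Prop :=
  S i = Letter.star ∧ ∀ j, i < j → S j ≠ Letter.star

/-- `i` is the position of the leftmost `0` of `S`. -/
def IsLeftmostZero {n : ℕ} (S : FSeq n) (i : Fin n) : Prop :=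
  S i = Letter.zero ∧ ∀ j, j < i → S j ≠ Letter.zero

/-- `i` is the position of the leftmost `∗` of `S`. -/
def IsLeftmostStar {n : ℕ} (S : FSeq n) (i : Fin n) : Prop :=
  S i = Letter.star ∧ ∀ j, j < i → S j ≠ Letter.star

/-- Condition of rule (1), subcondition (a). -/
def Cond1a {n : ℕ} (k m0 m1 : ℕ) (S : FSeq n) : Prop :=
  count1 S + 1 ≤ k ∧ OneRight S ∧ count1 S ≠ m1

/-- Condition of rule (1), subcondition (b). -/
def Cond1b {n : ℕ} (k m0 m1 : ℕ) (S : FSeq n) : Prop :=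
  count1 S + 1 ≤ k ∧ OneRight S ∧ count1 S = m1 ∧ m0 < count0 S

/-- Condition of rule (1), subcondition (c): no `0` to the left of the leftmost `∗`. -/
def Cond1c {n : ℕ} (k m0 m1 : ℕ) (S : FSeq n) : Prop :=
  count1 S + 1 ≤ k ∧ OneRight S ∧ count1 S = m1 ∧ count0 S = m0 ∧ NoZeroLeft S

/-- Condition of rule (2), subcondition (a): here `count1 S + 1 ≠ m1` encodes `S(1) ≠ m₁ - 1`. -/
def Cond2a {n : ℕ} (k m0 m1 : ℕ) (S : FSeq n) : Prop :=
  count1 S + 2 ≤ k ∧ NoOneRight S ∧ count1 S + 1 ≠ m1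

/-- Condition of rule (2), subcondition (b). -/
def Cond2b {n : ℕ} (k m0 m1 : ℕ) (S : FSeq n) : Prop :=
  count1 S + 2 ≤ k ∧ NoOneRight S ∧ count1 S + 1 = m1 ∧ m0 < count0 S

/-- Condition of rule (2), subcondition (c). -/
def Cond2c {n : ℕ} (k m0 m1 : ℕ) (S : FSeq n) : Prop :=
  count1 S + 2 ≤ k ∧ NoOneRight S ∧ count1 S + 1 = m1 ∧ count0 S = m0 ∧ NoZeroLeft S

/-- `S` is of type 1 (satisfies the condition of rule (1)). -/
def Type1 {n : ℕ} (k m0 m1 : ℕ) (S : FSeq n) : Prop :=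
  Cond1a k m0 m1 S ∨ Cond1b k m0 m1 S ∨ Cond1c k m0 m1 S

/-- `S` is of type 2 (satisfies the condition of rule (2)). -/
def Type2 {n : ℕ} (k m0 m1 : ℕ) (S : FSeq n) : Prop :=
  Cond2a k m0 m1 S ∨ Cond2b k m0 m1 S ∨ Cond2c k m0 m1 S

/-- `S` is of type 3: `S(1) = k-1`, `S(0) ≤ n-k-1`, no `1` right of the rightmost `∗`,
a `0` left of the leftmost `∗`. -/
def Type3 {n : ℕ} (k : ℕ) (S : FSeq n) : Prop :=
  count1 S + 1 = k ∧ count0 S + k + 1 ≤ n ∧ NoOneRight S ∧ ZeroLeft S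

/-- `S` is of type 4: `S(1) = k-1`, `S(0) ≤ n-k-2`, no `1` right of the rightmost `∗`,
no `0` left of the leftmost `∗`. -/
def Type4 {n : ℕ} (k : ℕ) (S : FSeq n) : Prop :=
  count1 S + 1 = k ∧ count0 S + k + 2 ≤ n ∧ NoOneRight S ∧ NoZeroLeft S

/-- `S` is of type 5: `S(1) = m₁`, `S(0) ≤ m₀`, a `1` right of the rightmost `∗`,
a `0` left of the leftmost `∗`. -/
def Type5 {n : ℕ} (m0 m1 : ℕ) (S : FSeq n) : Prop :=
  count1 S = m1 ∧ count0 S ≤ m0 ∧ OneRight S ∧ ZeroLeft S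

/-- `S` is of type 6: `S(1) = m₁`, `S(0) < m₀`, a `1` right of the rightmost `∗`,
no `0` left of the leftmost `∗`. -/
def Type6 {n : ℕ} (m0 m1 : ℕ) (S : FSeq n) : Prop :=
  count1 S = m1 ∧ count0 S < m0 ∧ OneRight S ∧ NoZeroLeft S

/-- `S` is of type 7: `S(1) = m₁-1`, `S(0) ≤ m₀`, no `1` right of the rightmost `∗`,
a `0` left of the leftmost `∗`. -/
def Type7 {n : ℕ} (m0 m1 : ℕ) (S : FSeq n) : Prop :=
  count1 S + 1 = m1 ∧ count0 S ≤ m0 ∧ NoOneRight S ∧ ZeroLeft S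

/-- `S` is of type 8: `S(1) = m₁-1`, `S(0) < m₀`, no `1` right of the rightmost `∗`,
no `0` left of the leftmost `∗`. -/
def Type8 {n : ℕ} (m0 m1 : ℕ) (S : FSeq n) : Prop :=
  count1 S + 1 = m1 ∧ count0 S < m0 ∧ NoOneRight S ∧ NoZeroLeft S

/-- `S` is of type 9: `S(1) = k`, `S(0) = n-k`, and `S ≠ v₀`. -/
def Type9 {n : ℕ} (k : ℕ) (S : FSeq n) : Prop :=
  count1 S = k ∧ count0 S + k = n ∧ S ≠ v0seq n k

/-- `S` is of type 10: `S(1) = k-1`, `S(0) = n-k-1`, no `1` right of the rightmost `∗`,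
no `0` left of the leftmost `∗`. -/
def Type10 {n : ℕ} (k : ℕ) (S : FSeq n) : Prop :=
  count1 S + 1 = k ∧ count0 S + k + 1 = n ∧ NoOneRight S ∧ NoZeroLeft S

/-- `S` is of type `i` for `1 ≤ i ≤ 10` (and of no type otherwise). -/
def OfType {n : ℕ} (k m0 m1 : ℕ) (i : ℕ) (S : FSeq n) : Prop :=
  match i with
  | 1 => Type1 k m0 m1 S
  | 2 => Type2 k m0 m1 S
  | 3 => Type3 k S
  | 4 => Type4 k S
  | 5 => Type5 m0 m1 S
  | 6 => Type6 m0 m1 S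
  | 7 => Type7 m0 m1 S
  | 8 => Type8 m0 m1 S
  | 9 => Type9 k S
  | 10 => Type10 k S
  | _ => False

/-- The replacement of rule (1): replace the rightmost `1` with `∗`. -/
def Apply1 {n : ℕ} (S S' : FSeq n) : Prop :=
  ∃ i, IsRightmostOne S i ∧ S' = Function.update S i Letter.star

/-- The replacement of rule (2): replace the rightmost `∗` with `1`. -/
def Apply2 {n : ℕ} (S S' : FSeq n) : Prop :=
  ∃ i, IsRightmostStar S i ∧ S' = Function.update S i Letter.one

/-- The replacement of rules (3), (5) and (7): replace the leftmost `0` with `∗`. -/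
def Apply3 {n : ℕ} (S S' : FSeq n) : Prop :=
  ∃ i, IsLeftmostZero S i ∧ S' = Function.update S i Letter.star

/-- The replacement of rules (4), (6) and (8): replace the leftmost `∗` with `0`. -/
def Apply4 {n : ℕ} (S S' : FSeq n) : Prop :=
  ∃ i, IsLeftmostStar S i ∧ S' = Function.update S i Letter.zero

/-- The replacement of rule (9): replace the leftmost `0` and the rightmost `1` each with `∗`. -/
def Apply9 {n : ℕ} (S S' : FSeq n) : Prop :=
  ∃ i j, IsLeftmostZero S i ∧ IsRightmostOne S j ∧
    S' = Function.update (Function.update S i Letter.star) j Letter.star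

/-- The replacement of rule (10): replace the leftmost `∗` with `0` and the other `∗` with `1`. -/
def Apply10 {n : ℕ} (S S' : FSeq n) : Prop :=
  ∃ i j, IsLeftmostStar S i ∧ IsRightmostStar S j ∧ i ≠ j ∧
    S' = Function.update (Function.update S i Letter.zero) j Letter.one

/-- The matching `V` on face sequences: a face sequence `S` of type 1, 3, 5, 7 or 9 is
matched with the result `S'` of applying the corresponding rule to it. -/
def Vmatch {n : ℕ} (k m0 m1 : ℕ) (S S' : FSeq n) : Prop :=
  FaceSeq k S ∧
    ((Type1 k m0 m1 S ∧ Apply1 S S') ∨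
     (Type3 k S ∧ Apply3 S S') ∨
     (Type5 m0 m1 S ∧ Apply3 S S') ∨
     (Type7 m0 m1 S ∧ Apply3 S S') ∨
     (Type9 k S ∧ Apply9 S S'))

/-- The vertex set of a face sequence `S`: the vertex sequences (0/1-sequences with
exactly `k` ones) agreeing with `S` wherever `S` is not `∗`. -/
def VertexSet {n : ℕ} (k : ℕ) (S : FSeq n) : Set (FSeq n) :=
  {v | (∀ i, v i ≠ Letter.star) ∧ count1 v = k ∧ ∀ i, S i ≠ Letter.star → v i = S i}

/-- The dimension of the face `F(S)`. -/
def fdim {n : ℕ} (S : FSeq n) : ℕ :=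
  if countStar S = 0 then 0 else countStar S - 1

/-- `T` is a codimension-1 face of `S`. -/
def Codim1 {n : ℕ} (k : ℕ) (T S : FSeq n) : Prop :=
  VertexSet k T ⊂ VertexSet k S ∧ fdim T + 1 = fdim S

/-- A (nontrivial) `V`-path `a₀, b₀, a₁, b₁, …, b_r, a_{r+1}` of face sequences. -/
structure VPath (n k m0 m1 r : ℕ) where
  a : Fin (r + 2) → FSeq n
  b : Fin (r + 1) → FSeq n
  face_a : ∀ i, FaceSeq k (a i)
  face_b : ∀ i, FaceSeq k (b i)
  mem : ∀ i : Fin (r + 1), Vmatch k m0 m1 (a i.castSucc) (b i)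
  codim_left : ∀ i : Fin (r + 1), Codim1 k (a i.castSucc) (b i)
  codim_right : ∀ i : Fin (r + 1), Codim1 k (a i.succ) (b i)
  step_ne : ∀ i : Fin (r + 1), a i.castSucc ≠ a i.succ

/-!
Rule (3) turns the leftmost `0` of `S` into a `∗`. Since some `0` of `S` precedes every `∗`,
that position becomes the leftmost `∗` and no `0` is left before it, so rule (4) applies and
restores the `0`. Conversely, rule (4) turns the leftmost `∗` of `T` into a `0`; as no `0`
preceded it, this is the leftmost `0`, and it precedes the remaining `∗`'s, of which there are
at least two because `S(0) + S(1) + #∗ = n`. Either rule moves `S(0)` and `#∗` by one in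
opposite directions and fixes `S(1)`, which matches the numerical conditions of types 3 and 4.
-/

open Finset Function

theorem Finset.card_filter_update_add {ι α : Type*} [Fintype ι] [DecidableEq ι] [DecidableEq α]
    (f : ι → α) (i : ι) (b a : α) :
    #{j | update f i b j = a} + (if f i = a then 1 else 0) =
      #{j | f j = a} + (if b = a then 1 else 0) := by
  simp only [card_filter]
  rw [← add_sum_erase _ _ (mem_univ i), ← add_sum_erase _ _ (mem_univ i),
    sum_congr rfl fun j hj => by rw [update_of_ne (ne_of_mem_erase hj)], update_self]
  omega

section FaceSequences

variable {n : ℕ}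

theorem count0_add_count1_add_countStar (S : FSeq n) :
    count0 S + count1 S + countStar S = n := by
  simp only [count0, count1, countStar, card_filter, ← sum_add_distrib]
  calc ∑ i, ((if S i = .zero then 1 else 0) + (if S i = .one then 1 else 0) +
          (if S i = .star then 1 else 0)) = ∑ _i : Fin n, 1 :=
        sum_congr rfl fun i _ => by cases S i <;> rfl
    _ = n := by simp

theorem countStar_pos {S : FSeq n} (h : hasStar S) : 0 < countStar S :=
  let ⟨i, hi⟩ := h
  card_pos.mpr ⟨i, by simp [hi]⟩

theorem counts_update_star_of_eq_zero {S : FSeq n} {i : Fin n} (h : S i = .zero) :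
    count0 (update S i .star) + 1 = count0 S ∧ count1 (update S i .star) = count1 S ∧
      countStar (update S i .star) = countStar S + 1 := by
  have h0 := card_filter_update_add S i .star .zero
  have h1 := card_filter_update_add S i .star .one
  have hs := card_filter_update_add S i .star .star
  simp only [h, reduceCtorEq, if_true, if_false, add_zero] at h0 h1 hs
  exact ⟨h0, h1, hs⟩

theorem NoOneRight.update_star {S : FSeq n} (hS : NoOneRight S) (i : Fin n) :
    NoOneRight (update S i .star) := by
  refine ⟨⟨i, update_self ..⟩, fun j hj => ?_⟩
  have hji : j ≠ i := by rintro rfl; simp at hj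
  obtain ⟨j', hjj', hj'⟩ := hS.2 j (by rwa [update_of_ne hji] at hj)
  refine ⟨j', hjj', ?_⟩
  rcases eq_or_ne j' i with rfl | hj'i
  · exact update_self ..
  · rwa [update_of_ne hj'i]

theorem NoOneRight.update_zero_of_lt {S : FSeq n} (hS : NoOneRight S) {i q : Fin n}
    (hq : S q = .star) (hiq : i < q) : NoOneRight (update S i .zero) := by
  have hq' : update S i .zero q = .star := by rwa [update_of_ne hiq.ne']
  refine ⟨⟨q, hq'⟩, fun j hj => ?_⟩
  have hji : j ≠ i := by rintro rfl; simp at hj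
  obtain ⟨j', hjj', hj'⟩ := hS.2 j (by rwa [update_of_ne hji] at hj)
  rcases eq_or_ne j' i with rfl | hj'i
  · exact ⟨q, hjj'.trans hiq, hq'⟩
  · exact ⟨j', hjj', by rwa [update_of_ne hj'i]⟩

namespace IsLeftmostZero

variable {S : FSeq n} {i : Fin n} (hi : IsLeftmostZero S i)
include hi

theorem isLeftmostStar_update_star (hS : ZeroLeft S) : IsLeftmostStar (update S i .star) i := by
  obtain ⟨-, p, hp, hbefore⟩ := hS
  have hip : i ≤ p := not_lt.mp fun hpi => hi.2 p hpi hp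
  refine ⟨update_self .., fun j hj => ?_⟩
  rw [update_of_ne hj.ne]
  exact hbefore j (hj.trans_le hip)

theorem noZeroLeft_update_star : NoZeroLeft (update S i .star) := by
  refine ⟨⟨i, update_self ..⟩, fun j hj => ⟨i, ?_, update_self ..⟩⟩
  have hji : j ≠ i := by rintro rfl; simp at hj
  rw [update_of_ne hji] at hj
  exact lt_of_le_of_ne (not_lt.mp fun hji' => hi.2 j hji' hj) hji.symm

end IsLeftmostZero

namespace IsLeftmostStar

variable {S : FSeq n} {i : Fin n} (hi : IsLeftmostStar S i)
include hi

theorem exists_star_gt (h : 2 ≤ countStar S) : ∃ q, i < q ∧ S q = .star := by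
  obtain ⟨q, hq, hqi⟩ := exists_mem_ne (s := {j | S j = .star}) h i
  have hq : S q = .star := (mem_filter.mp hq).2
  exact ⟨q, lt_of_le_of_ne (not_lt.mp fun hqi' => hi.2 q hqi' hq) hqi.symm, hq⟩

theorem isLeftmostZero_update_zero (hS : NoZeroLeft S) :
    IsLeftmostZero (update S i .zero) i := by
  refine ⟨update_self .., fun j hj hzero => ?_⟩
  rw [update_of_ne hj.ne] at hzero
  obtain ⟨j', hj'j, hj'⟩ := hS.2 j hzero
  exact hi.2 j' (hj'j.trans hj) hj'

theorem zeroLeft_update_zero {q : Fin n} (hq : S q = .star) (hiq : i < q) :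
    ZeroLeft (update S i .zero) := by
  refine ⟨⟨q, by rwa [update_of_ne hiq.ne']⟩, i, update_self .., fun j hj => ?_⟩
  rw [update_of_ne hj.ne]
  exact hi.2 j hj

end IsLeftmostStar

theorem Type3.update_star {k : ℕ} {S : FSeq n} {i : Fin n} (hS : Type3 k S)
    (hi : IsLeftmostZero S i) :
    FaceSeq k (update S i .star) ∧ Type4 k (update S i .star) ∧
      Apply4 (update S i .star) S := by
  obtain ⟨h1, h0, hNOR, hZL⟩ := hS
  obtain ⟨hc0, hc1, hcs⟩ := counts_update_star_of_eq_zero hi.1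
  have hstar := countStar_pos hZL.1
  refine ⟨Or.inr ⟨by omega, by omega⟩,
    ⟨by omega, by omega, hNOR.update_star i, hi.noZeroLeft_update_star⟩,
    i, hi.isLeftmostStar_update_star hZL, ?_⟩
  rw [update_idem, ← hi.1, update_eq_self]

theorem Type4.update_zero {k : ℕ} {T : FSeq n} {i : Fin n} (hT : Type4 k T)
    (hi : IsLeftmostStar T i) :
    FaceSeq k (update T i .zero) ∧ Type3 k (update T i .zero) ∧
      Apply3 (update T i .zero) T := by
  obtain ⟨h1, h0, hNOR, hNZL⟩ := hT
  have hzero : update T i .zero i = .zero := update_self ..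
  have hback : update (update T i .zero) i .star = T := by
    rw [update_idem, ← hi.1, update_eq_self]
  obtain ⟨hc0, hc1, hcs⟩ := counts_update_star_of_eq_zero hzero
  rw [hback] at hc0 hc1 hcs
  have hsum := count0_add_count1_add_countStar T
  obtain ⟨q, hiq, hq⟩ := hi.exists_star_gt (by omega)
  refine ⟨Or.inr ⟨by omega, by omega⟩,
    ⟨by omega, by omega, hNOR.update_zero_of_lt hq hiq, hi.zeroLeft_update_zero hq hiq⟩,
    i, hi.isLeftmostZero_update_zero hNZL, hback.symm⟩

end FaceSequences

theorem rule3_rule4_inverse_general (n k : ℕ) :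
    (∀ S S' : FSeq n, FaceSeq k S → Type3 k S → Apply3 S S' →
      FaceSeq k S' ∧ Type4 k S' ∧ Apply4 S' S) ∧
    (∀ T T' : FSeq n, FaceSeq k T → Type4 k T → Apply4 T T' →
      FaceSeq k T' ∧ Type3 k T' ∧ Apply3 T' T) :=
  ⟨fun _ _ _ hS ⟨_, hi, hS'⟩ => hS' ▸ hS.update_star hi,
    fun _ _ _ hT ⟨_, hi, hT'⟩ => hT' ▸ hT.update_zero hi⟩

/-- **Rules (3) and (4) are inverses of each other.** -/
theorem rule3_rule4_inverse (n k m0 m1 : ℕ) (hk1 : 1 ≤ k) (hk2 : k ≤ n - 1)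
    (hm0 : m0 + k + 1 ≤ n) (hm1l : 1 ≤ m1) (hm1u : m1 + 1 ≤ k) :
    (∀ S S' : FSeq n, FaceSeq k S → Type3 k S → Apply3 S S' →
      FaceSeq k S' ∧ Type4 k S' ∧ Apply4 S' S) ∧
    (∀ T T' : FSeq n, FaceSeq k T → Type4 k T → Apply4 T T' →
      FaceSeq k T' ∧ Type3 k T' ∧ Apply3 T' T) :=
  rule3_rule4_inverse_general n k
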